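/- If w̲ is a local minimizer and w̄ is a local maximizer of g(w) = (1/2)((1/2)‖w‖² − ν)² + (1/2)wᵀDw − ψᵀw, then ‖w̄‖ < ‖w̲‖. -/

import Mathlib

/-!
Restricting `g` to a coordinate line `t ↦ w + t eᵢ` gives a quartic in `t` with leading
coefficient `1/8` and `t²`-coefficient `(½‖w‖² − ν + αᵢ + wᵢ²)/2`. At a local minimizer this
coefficient is `≥ 0`; at a local maximizer it is `< 0`, since it is `≤ 0` and a quartic
`a + d t³ + t⁴/8` has no local maximum at `0`. If `‖w̲‖ ≤ ‖w̄‖`, comparing the two conditions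
coordinatewise gives `w̄ᵢ² < w̲ᵢ²` for every `i`, and summing contradicts `‖w̲‖ ≤ ‖w̄‖`.
-/

open Finset Filter Topology

theorem Fintype.sum_apply_update {ι β M : Type*} [Fintype ι] [DecidableEq ι] [AddCommGroup M]
    (F : ι → β → M) (w : ι → β) (i : ι) (a : β) :
    ∑ j, F j (Function.update w i a j) = ∑ j, F j (w j) + (F i a - F i (w i)) := by
  simp_rw [Function.apply_update F w i a]
  rw [sum_update_of_mem (mem_univ i),
    sum_eq_add_sum_sdiff_singleton_of_mem (mem_univ i) (fun j => F j (w j))]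
  abel

section Quartic

variable {a b c d e : ℝ}

theorem IsLocalMin.quartic_coeffs
    (h : IsLocalMin (fun t : ℝ => a + b*t + c*t^2 + d*t^3 + e*t^4) 0) :
    b = 0 ∧ 0 ≤ c := by
  have hb : b = 0 := by
    refine h.hasDerivAt_eq_zero ?_
    simpa using ((((hasDerivAt_id (0:ℝ)).const_mul b).const_add a).fun_add
      ((hasDerivAt_pow 2 (0:ℝ)).const_mul c)).fun_add
      ((hasDerivAt_pow 3 (0:ℝ)).const_mul d) |>.fun_add ((hasDerivAt_pow 4 (0:ℝ)).const_mul e)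
  subst hb
  refine ⟨rfl, ge_of_tendsto (x := 𝓝[≠] (0:ℝ)) (f := fun t => c + d*t + e*t^2) ?_ ?_⟩
  · exact ((by fun_prop : Continuous fun t : ℝ => c + d*t + e*t^2).tendsto' 0 c
      (by simp)).mono_left nhdsWithin_le_nhds
  · filter_upwards [h.filter_mono nhdsWithin_le_nhds, self_mem_nhdsWithin] with t ht ht0
    have : 0 < t^2 := pow_two_pos_of_ne_zero ht0
    nlinarith

theorem IsLocalMax.quartic_coeffs
    (h : IsLocalMax (fun t : ℝ => a + b*t + c*t^2 + d*t^3 + e*t^4) 0) :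
    b = 0 ∧ c ≤ 0 := by
  have := IsLocalMin.quartic_coeffs (a := -a) (b := -b) (c := -c) (d := -d) (e := -e)
    (by convert h.neg using 2 with t <;> first | rfl | ring)
  constructor <;> linarith

theorem not_isLocalMax_cubic_add_quartic (he : 0 < e) :
    ¬ IsLocalMax (fun t : ℝ => a + d*t^3 + e*t^4) 0 := by
  intro h
  rcases le_or_gt 0 d with hd | hd
  · obtain ⟨t, ht, htpos⟩ := ((h.filter_mono (nhdsWithin_le_nhds (s := Set.Ioi 0))).and
      self_mem_nhdsWithin).exists
    simp only at ht
    nlinarith [pow_pos htpos 3, pow_pos htpos 4]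
  · obtain ⟨t, ht, htneg⟩ := ((h.filter_mono (nhdsWithin_le_nhds (s := Set.Iio 0))).and
      self_mem_nhdsWithin).exists
    simp only at ht
    have htneg : 0 < -t := neg_pos.2 htneg
    nlinarith [pow_pos htneg 3, pow_pos htneg 4]

theorem IsLocalMax.quartic_coeff_two_neg (he : 0 < e)
    (h : IsLocalMax (fun t : ℝ => a + b*t + c*t^2 + d*t^3 + e*t^4) 0) : c < 0 := by
  obtain ⟨rfl, hc⟩ := h.quartic_coeffs
  refine hc.lt_of_ne fun hc0 => not_isLocalMax_cubic_add_quartic (a := a) (d := d) he ?_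
  subst hc0
  simpa using h

end Quartic

section UpdateAdd

variable {ι : Type*} [DecidableEq ι]

theorem continuous_update_add (w : ι → ℝ) (i : ι) :
    Continuous fun t : ℝ => Function.update w i (w i + t) :=
  continuous_const.update i (continuous_const.add continuous_id)

variable {β : Type*} [Preorder β] {f : (ι → ℝ) → β} {w : ι → ℝ}

theorem IsLocalMin.comp_update_add (h : IsLocalMin f w) (i : ι) :
    IsLocalMin (fun t : ℝ => f (Function.update w i (w i + t))) 0 :=
  IsLocalMin.comp_continuous (g := fun t => Function.update w i (w i + t))
    (by rwa [add_zero, Function.update_eq_self]) (continuous_update_add w i).continuousAt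

theorem IsLocalMax.comp_update_add (h : IsLocalMax f w) (i : ι) :
    IsLocalMax (fun t : ℝ => f (Function.update w i (w i + t))) 0 :=
  IsLocalMax.comp_continuous (g := fun t => Function.update w i (w i + t))
    (by rwa [add_zero, Function.update_eq_self]) (continuous_update_add w i).continuousAt

end UpdateAdd

section Objective

variable {ι : Type*} [Fintype ι]

noncomputable def quarticObjective (α ψ : ι → ℝ) (ν : ℝ) (w : ι → ℝ) : ℝ :=
  (1/2) * ((1/2) * ∑ i, (w i)^2 - ν)^2 + (1/2) * ∑ i, α i * (w i)^2 - ∑ i, ψ i * w i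

variable [DecidableEq ι] (α ψ : ι → ℝ) (ν : ℝ)

theorem quarticObjective_update_add (w : ι → ℝ) (i : ι) (t : ℝ) :
    quarticObjective α ψ ν (Function.update w i (w i + t)) =
      quarticObjective α ψ ν w + (((1/2) * ∑ j, (w j)^2 - ν + α i) * w i - ψ i) * t
        + ((1/2) * ((1/2) * ∑ j, (w j)^2 - ν + α i + (w i)^2)) * t^2
        + (w i / 2) * t^3 + (1/8) * t^4 := by
  simp only [quarticObjective, Fintype.sum_apply_update (fun _ x => x^2),
    Fintype.sum_apply_update (fun j x => α j * x^2), Fintype.sum_apply_update (fun j x => ψ j * x)]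
  ring

variable {α ψ ν}

theorem IsLocalMin.quarticObjective_coeff_nonneg {w : ι → ℝ}
    (h : IsLocalMin (quarticObjective α ψ ν) w) (i : ι) :
    0 ≤ (1/2) * ∑ j, (w j)^2 - ν + α i + (w i)^2 := by
  have hi := h.comp_update_add i
  simp only [quarticObjective_update_add] at hi
  linarith [hi.quartic_coeffs.2]

theorem IsLocalMax.quarticObjective_coeff_neg {w : ι → ℝ}
    (h : IsLocalMax (quarticObjective α ψ ν) w) (i : ι) :
    (1/2) * ∑ j, (w j)^2 - ν + α i + (w i)^2 < 0 := by
  have hi := h.comp_update_add i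
  simp only [quarticObjective_update_add] at hi
  linarith [hi.quartic_coeff_two_neg (by norm_num)]

theorem quarticObjective_sum_sq_lt [Nonempty ι] {wl wm : ι → ℝ}
    (hl : IsLocalMin (quarticObjective α ψ ν) wl) (hm : IsLocalMax (quarticObjective α ψ ν) wm) :
    ∑ i, (wm i)^2 < ∑ i, (wl i)^2 := by
  by_contra! hle
  refine hle.not_gt (sum_lt_sum_of_nonempty univ_nonempty fun i _ => ?_)
  linarith [hl.quarticObjective_coeff_nonneg i, hm.quarticObjective_coeff_neg i]

end Objective

theorem stmt17_general {n : ℕ} (hn : 1 ≤ n) (α ψ : Fin n → ℝ) (ν : ℝ)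
    (g : (Fin n → ℝ) → ℝ)
    (hg : ∀ w, g w = (1/2) * ((1/2) * ∑ i, (w i)^2 - ν)^2
        + (1/2) * ∑ i, α i * (w i)^2 - ∑ i, ψ i * w i)
    (wl wm : Fin n → ℝ) (hl : IsLocalMin g wl) (hm : IsLocalMax g wm) :
    Real.sqrt (∑ i, (wm i)^2) < Real.sqrt (∑ i, (wl i)^2) := by
  obtain rfl : g = quarticObjective α ψ ν := funext hg
  have : Nonempty (Fin n) := ⟨⟨0, hn⟩⟩
  exact Real.sqrt_lt_sqrt (sum_nonneg fun i _ => sq_nonneg _) (quarticObjective_sum_sq_lt hl hm)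

theorem stmt17 {n : ℕ} (hn : 1 ≤ n) (α ψ : Fin n → ℝ) (hα : Monotone α) (ν : ℝ)
    (g : (Fin n → ℝ) → ℝ)
    (hg : ∀ w, g w = (1/2) * ((1/2) * ∑ i, (w i)^2 - ν)^2
        + (1/2) * ∑ i, α i * (w i)^2 - ∑ i, ψ i * w i)
    (wl wm : Fin n → ℝ) (hl : IsLocalMin g wl) (hm : IsLocalMax g wm) :
    Real.sqrt (∑ i, (wm i)^2) < Real.sqrt (∑ i, (wl i)^2) :=
  stmt17_general hn α ψ ν g hg wl wm hl hm
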